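/- For any Lorentz transformation A (a real 4×4 matrix), there exists a unique pair (v, O) with v ∈ ℝ³, |v| < 1, and O ∈ SO(3,ℝ), such that, setting γ = 1/√(1 − |v|²), A equals the 4×4 block matrix with top-left 1×1 block ε₁γ, top-right 1×3 block ε₁γ·vᵀO, bottom-left 3×1 block ε₂γ·v, and bottom-right 3×3 block ε₂·(I₃ + (γ²/(1+γ))·v vᵀ)·O, where ε₁ = 1 if A is orthochronous and ε₁ = −1 otherwise, and ε₂ = −1 if exactly one of the two properties 'A is proper' and 'A is orthochronous' holds, ε₂ = 1 otherwise. -/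

import Mathlib

/-- The Minkowski quadratic form on ℝ⁴: q(t,x,y,z) = x² + y² + z² − t². -/
def mink (x : Fin 4 → ℝ) : ℝ := (x 1)^2 + (x 2)^2 + (x 3)^2 - (x 0)^2

/-- A real 4×4 matrix is a Lorentz transformation if it preserves the Minkowski form. -/
def IsLorentz (A : Matrix (Fin 4) (Fin 4) ℝ) : Prop :=
  ∀ x : Fin 4 → ℝ, mink (A.mulVec x) = mink x

/-- A Lorentz transformation is proper if its determinant is positive. -/
def IsProper (A : Matrix (Fin 4) (Fin 4) ℝ) : Prop := 0 < A.det

/-- A Lorentz transformation is orthochronous if it preserves the sign of the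
time component of every timelike vector. -/
def IsOrthochronous (A : Matrix (Fin 4) (Fin 4) ℝ) : Prop :=
  ∀ x : Fin 4 → ℝ, (x 1)^2 + (x 2)^2 + (x 3)^2 < (x 0)^2 →
    Real.sign (A.mulVec x 0) = Real.sign (x 0)

/-- Membership in SO(3,ℝ). -/
def SO3 (O : Matrix (Fin 3) (Fin 3) ℝ) : Prop := O.transpose * O = 1 ∧ O.det = 1

/-- Squared Euclidean norm of a vector in ℝ³. -/
def sq3 (v : Fin 3 → ℝ) : ℝ := (v 0)^2 + (v 1)^2 + (v 2)^2

/-- The Lorentz factor γ = 1/√(1 − |v|²). -/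
noncomputable def gam (v : Fin 3 → ℝ) : ℝ := 1 / Real.sqrt (1 - sq3 v)

/-- Build a 4×4 matrix from blocks of sizes 1 and 3. -/
def blk4 (a : Matrix (Fin 1) (Fin 1) ℝ) (b : Matrix (Fin 1) (Fin 3) ℝ)
    (c : Matrix (Fin 3) (Fin 1) ℝ) (d : Matrix (Fin 3) (Fin 3) ℝ) :
    Matrix (Fin 4) (Fin 4) ℝ :=
  Matrix.reindex finSumFinEquiv finSumFinEquiv (Matrix.fromBlocks a b c d)

/-- The 4×4 matrix with top-left block ε₁γ, top-right block ε₁γ·vᵀO,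
bottom-left block ε₂γ·v, and bottom-right block ε₂·(I₃ + (γ²/(1+γ))·v vᵀ)·O. -/
noncomputable def lorentzForm (e1 e2 : ℝ) (v : Fin 3 → ℝ) (O : Matrix (Fin 3) (Fin 3) ℝ) :
    Matrix (Fin 4) (Fin 4) ℝ :=
  blk4 (Matrix.of fun _ _ => e1 * gam v)
       (Matrix.of fun _ j => e1 * gam v * Matrix.vecMul v O j)
       (Matrix.of fun i _ => e2 * gam v * v i)
       (e2 • ((1 + (gam v ^ 2 / (1 + gam v)) • Matrix.vecMulVec v v) * O))

open scoped Classical in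
/-- ε₁ = 1 if A is orthochronous, −1 otherwise. -/
noncomputable def eps1 (A : Matrix (Fin 4) (Fin 4) ℝ) : ℝ :=
  if IsOrthochronous A then 1 else -1

open scoped Classical in
/-- ε₂ = −1 if exactly one of "proper" and "orthochronous" holds, 1 otherwise. -/
noncomputable def eps2 (A : Matrix (Fin 4) (Fin 4) ℝ) : ℝ :=
  if (IsProper A ∧ ¬ IsOrthochronous A) ∨ (¬ IsProper A ∧ IsOrthochronous A) then -1 else 1


/-!
Multiplying `A` by the sign matrix `diag(ε₁, ε₂, ε₂, ε₂)` yields a Lorentz matrix with positive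
time-time entry and determinant `1`, and turns `lorentzForm ε₁ ε₂ v O` into `lorentzForm 1 1 v O`,
so it suffices to treat that case. Write such a matrix as `(γ, bᵀ; c, D)`. The relation
`Aᵀ η A = η` gives `|c|² = γ² - 1`, `Dᵀ c = γ b` and `Dᵀ D = 1 + b bᵀ`, so `v = c / γ` has Lorentz
factor `γ`. The spatial block `M = 1 + γ²/(1+γ) v vᵀ` of the boost has inverse
`N = 1 - γ/(1+γ) v vᵀ` with `N² = 1 - v vᵀ`, so `O = N D` satisfies `Oᵀ O = Dᵀ D - b bᵀ = 1`.
Since `A⁻¹ = η Aᵀ η`, the cofactor formula gives `det D = γ det A = γ`, and `det N = 1/γ`, so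
`det O = 1`. Conversely, the first column of `lorentzForm 1 1 v O` determines `v`, and then
`O = N D`.
-/

open Matrix

section RankOnePerturbation

variable {R ι : Type*} [CommRing R] [Fintype ι] [DecidableEq ι]

lemma one_add_smul_vecMulVec_mul (α β : R) (v : ι → R) :
    (1 + α • vecMulVec v v) * (1 + β • vecMulVec v v)
      = 1 + (α + β + α * β * (v ⬝ᵥ v)) • vecMulVec v v := by
  simp only [Matrix.add_mul, Matrix.mul_add, Matrix.one_mul, Matrix.mul_one, Matrix.smul_mul,
    Matrix.mul_smul, vecMulVec_mul_vecMulVec, vecMulVec_smul, smul_smul]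
  module

lemma vecMul_one_add_smul_vecMulVec (α : R) (v : ι → R) :
    v ᵥ* (1 + α • vecMulVec v v) = (1 + α * (v ⬝ᵥ v)) • v := by
  rw [vecMul_add, vecMul_one, vecMul_smul, vecMul_vecMulVec, smul_smul, add_smul, one_smul,
    mul_comm]

lemma det_one_add_smul_vecMulVec (α : R) (v : ι → R) :
    (1 + α • vecMulVec v v).det = 1 + α * (v ⬝ᵥ v) := by
  rw [← smul_vecMulVec, vecMulVec_eq Unit, det_one_add_replicateCol_mul_replicateRow,
    dotProduct_smul, smul_eq_mul]

end RankOnePerturbation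

section BoostBlock

variable {ι : Type*} [DecidableEq ι]

noncomputable def boostBlock (g : ℝ) (v : ι → ℝ) : Matrix ι ι ℝ :=
  1 + (g ^ 2 / (1 + g)) • vecMulVec v v

noncomputable def boostBlockInv (g : ℝ) (v : ι → ℝ) : Matrix ι ι ℝ :=
  1 - (g / (1 + g)) • vecMulVec v v

variable {g : ℝ} {v : ι → ℝ}

lemma boostBlockInv_eq : boostBlockInv g v = 1 + (-(g / (1 + g))) • vecMulVec v v := by
  rw [boostBlockInv, neg_smul, sub_eq_add_neg]

lemma transpose_boostBlockInv : (boostBlockInv g v)ᵀ = boostBlockInv g v := by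
  rw [boostBlockInv, transpose_sub, transpose_smul, transpose_one, transpose_vecMulVec]

variable [Fintype ι] (hg : 0 < g) (hv : g ^ 2 * (1 - v ⬝ᵥ v) = 1)
include hg hv

lemma boostBlock_mul_boostBlockInv : boostBlock g v * boostBlockInv g v = 1 := by
  have hcoef : g ^ 2 / (1 + g) + -(g / (1 + g)) + g ^ 2 / (1 + g) * -(g / (1 + g)) * (v ⬝ᵥ v)
      = 0 := by
    field_simp
    linear_combination g * hv
  rw [boostBlock, boostBlockInv_eq, one_add_smul_vecMulVec_mul, hcoef, zero_smul, add_zero]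

lemma boostBlockInv_mul_boostBlock : boostBlockInv g v * boostBlock g v = 1 :=
  mul_eq_one_comm.mp (boostBlock_mul_boostBlockInv hg hv)

lemma boostBlockInv_mul_self : boostBlockInv g v * boostBlockInv g v = 1 - vecMulVec v v := by
  have hcoef : -(g / (1 + g)) + -(g / (1 + g)) + -(g / (1 + g)) * -(g / (1 + g)) * (v ⬝ᵥ v)
      = -1 := by
    field_simp
    linear_combination (-1) * hv
  rw [boostBlockInv_eq, one_add_smul_vecMulVec_mul, hcoef, neg_one_smul, sub_eq_add_neg]

omit [DecidableEq ι] in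
lemma one_add_neg_div_mul_dotProduct_self : 1 + -(g / (1 + g)) * (v ⬝ᵥ v) = g⁻¹ := by
  field_simp
  linear_combination hv

lemma vecMul_boostBlockInv : v ᵥ* boostBlockInv g v = g⁻¹ • v := by
  rw [boostBlockInv_eq, vecMul_one_add_smul_vecMulVec, one_add_neg_div_mul_dotProduct_self hg hv]

lemma det_boostBlockInv : (boostBlockInv g v).det = g⁻¹ := by
  rw [boostBlockInv_eq, det_one_add_smul_vecMulVec, one_add_neg_div_mul_dotProduct_self hg hv]

lemma vecMul_boostBlockInv_mul (D : Matrix ι ι ℝ) :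
    v ᵥ* (boostBlockInv g v * D) = g⁻¹ • (Dᵀ *ᵥ v) := by
  rw [← vecMul_vecMul, vecMul_boostBlockInv hg hv, smul_vecMul, mulVec_transpose]

lemma transpose_mul_self_boostBlockInv_mul {b : ι → ℝ} {D : Matrix ι ι ℝ} (hDv : Dᵀ *ᵥ v = b)
    (hDD : Dᵀ * D = 1 + vecMulVec b b) :
    (boostBlockInv g v * D)ᵀ * (boostBlockInv g v * D) = 1 := by
  have hvD : v ᵥ* D = b := by rw [← mulVec_transpose, hDv]
  calc (boostBlockInv g v * D)ᵀ * (boostBlockInv g v * D)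
      = Dᵀ * (boostBlockInv g v * boostBlockInv g v) * D := by
        rw [transpose_mul, transpose_boostBlockInv]; simp only [Matrix.mul_assoc]
    _ = Dᵀ * D - vecMulVec b b := by
        rw [boostBlockInv_mul_self hg hv, Matrix.mul_sub, Matrix.sub_mul, Matrix.mul_one,
          mul_vecMulVec, vecMulVec_mul, hDv, hvD]
    _ = 1 := by rw [hDD, add_sub_cancel_right]

end BoostBlock

lemma Matrix.IsSymm.eq_of_dotProduct_mulVec_self_eq {n : Type*} [Fintype n] [DecidableEq n]
    {S T : Matrix n n ℝ} (hS : S.IsSymm) (hT : T.IsSymm)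
    (h : ∀ x, x ⬝ᵥ S *ᵥ x = x ⬝ᵥ T *ᵥ x) : S = T := by
  ext i j
  have hii := h (Pi.single i 1)
  have hjj := h (Pi.single j 1)
  have hij := h (Pi.single i 1 + Pi.single j 1)
  simp only [mulVec_add, dotProduct_add, add_dotProduct, mulVec_single_one, single_dotProduct,
    one_mul, col_apply] at hii hjj hij
  have hS' : S i j = S j i := hS.apply j i
  have hT' : T i j = T j i := hT.apply j i
  linarith

lemma dotProduct_fin_succ {α : Type*} [AddCommMonoid α] [Mul α] {n : ℕ} (v w : Fin (n + 1) → α) :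
    v ⬝ᵥ w = v 0 * w 0 + Fin.tail v ⬝ᵥ Fin.tail w :=
  Fin.sum_univ_succ _

lemma Real.sign_mul_add_of_sq_lt {a t s : ℝ} (ha : 0 < a) (h : s ^ 2 < (a * t) ^ 2) :
    Real.sign (a * t + s) = Real.sign t := by
  have hs := abs_lt.mp ((sq_lt_sq.mp h).trans_eq (abs_mul a t))
  rw [abs_of_pos ha] at hs
  rcases lt_trichotomy t 0 with ht | rfl | ht
  · rw [abs_of_neg ht] at hs
    rw [Real.sign_of_neg ht, Real.sign_of_neg (by linarith)]
  · simp only [mul_zero, abs_zero] at hs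
    linarith
  · rw [abs_of_pos ht] at hs
    rw [Real.sign_of_pos ht, Real.sign_of_pos (by linarith)]

lemma eq_mul_iff_mul_eq_of_mul_self_eq_one {M : Type*} [Monoid M] {s a b : M} (hs : s * s = 1) :
    a = s * b ↔ s * a = b := by
  constructor
  · rintro rfl; rw [← mul_assoc, hs, one_mul]
  · rintro rfl; rw [← mul_assoc, hs, one_mul]

def minkowskiMetric : Matrix (Fin 4) (Fin 4) ℝ := diagonal (Fin.cons (-1) 1)

local notation "η" => minkowskiMetric

lemma minkowskiMetric_mul_self : η * η = 1 := by
  rw [minkowskiMetric, diagonal_mul_diagonal, ← diagonal_one]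
  congr 1
  ext i
  cases i using Fin.cases <;> simp

lemma minkowskiMetric_isSymm : IsSymm η := isSymm_diagonal _

lemma det_minkowskiMetric : det η = -1 := by
  simp [minkowskiMetric, Fin.prod_univ_succ]

lemma minkowskiMetric_succ_succ (i j : Fin 3) :
    η i.succ j.succ = (1 : Matrix (Fin 3) (Fin 3) ℝ) i j := by
  simp [minkowskiMetric, diagonal_apply, one_apply]

lemma mink_eq_dotProduct (x : Fin 4 → ℝ) : mink x = x ⬝ᵥ η *ᵥ x := by
  simp only [mink, sq, dotProduct, minkowskiMetric, mulVec_diagonal, Fin.sum_univ_succ,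
    Fin.cons_zero, neg_mul, one_mul, mul_neg, Fin.cons_succ, Pi.one_apply, Fin.succ_zero_eq_one,
    Fin.succ_one_eq_two, Finset.univ_unique, Fin.default_eq_zero, Finset.sum_singleton,
    Fin.reduceSucc]
  ring

lemma transpose_mul_minkowskiMetric_mul_apply (A : Matrix (Fin 4) (Fin 4) ℝ) (i j : Fin 4) :
    (Aᵀ * η * A) i j = Fin.tail (Aᵀ i) ⬝ᵥ Fin.tail (Aᵀ j) - A 0 i * A 0 j := by
  rw [minkowskiMetric, Matrix.mul_apply, Fin.sum_univ_succ]
  simp only [mul_diagonal, Fin.cons_zero, Fin.cons_succ, Pi.one_apply, transpose_apply, mul_one,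
    mul_neg_one, dotProduct, Fin.tail]
  ring

section MinkowskiBlocks

variable {A : Matrix (Fin 4) (Fin 4) ℝ} (h : Aᵀ * η * A = η)
include h

lemma tail_col_zero_dotProduct_self : Fin.tail (Aᵀ 0) ⬝ᵥ Fin.tail (Aᵀ 0) = A 0 0 ^ 2 - 1 := by
  have h00 := congrFun (congrFun h 0) 0
  rw [transpose_mul_minkowskiMetric_mul_apply, minkowskiMetric, diagonal_apply_eq,
    Fin.cons_zero] at h00
  linear_combination h00

lemma transpose_submatrix_mulVec_tail_col_zero :
    (A.submatrix Fin.succ Fin.succ)ᵀ *ᵥ Fin.tail (Aᵀ 0) = A 0 0 • Fin.tail (A 0) := by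
  ext j
  have hj := congrFun (congrFun h j.succ) 0
  rw [transpose_mul_minkowskiMetric_mul_apply, minkowskiMetric,
    diagonal_apply_ne _ (Fin.succ_ne_zero j)] at hj
  simp only [mulVec, dotProduct, Fin.tail, transpose_apply, submatrix_apply, Pi.smul_apply,
    smul_eq_mul] at hj ⊢
  linear_combination hj

lemma transpose_submatrix_mul_submatrix :
    (A.submatrix Fin.succ Fin.succ)ᵀ * A.submatrix Fin.succ Fin.succ
      = 1 + vecMulVec (Fin.tail (A 0)) (Fin.tail (A 0)) := by
  ext i j
  have hij := congrFun (congrFun h i.succ) j.succ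
  rw [transpose_mul_minkowskiMetric_mul_apply, minkowskiMetric_succ_succ] at hij
  simp only [Matrix.mul_apply, dotProduct, Fin.tail, transpose_apply, submatrix_apply,
    Matrix.add_apply, vecMulVec_apply] at hij ⊢
  linear_combination hij

end MinkowskiBlocks

namespace IsLorentz

variable {A : Matrix (Fin 4) (Fin 4) ℝ} (hA : IsLorentz A)
include hA

lemma transpose_mul_minkowskiMetric_mul : Aᵀ * η * A = η := by
  refine IsSymm.eq_of_dotProduct_mulVec_self_eq ?_ minkowskiMetric_isSymm fun x => ?_
  · rw [IsSymm, transpose_mul, transpose_mul, transpose_transpose, minkowskiMetric_isSymm.eq,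
      Matrix.mul_assoc]
  · rw [← mink_eq_dotProduct, ← hA, mink_eq_dotProduct, ← mulVec_mulVec, ← mulVec_mulVec,
      dotProduct_mulVec, vecMul_transpose, dotProduct_mulVec]

lemma mul_minkowskiMetric_mul_transpose_mul_minkowskiMetric : A * (η * Aᵀ * η) = 1 := by
  refine mul_eq_one_comm.mp ?_
  calc η * Aᵀ * η * A = η * (Aᵀ * η * A) := by simp only [Matrix.mul_assoc]
    _ = 1 := by rw [hA.transpose_mul_minkowskiMetric_mul, minkowskiMetric_mul_self]

lemma mul_minkowskiMetric_mul_transpose : A * η * Aᵀ = η := by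
  calc A * η * Aᵀ = A * (η * Aᵀ * η) * η := by
        simp only [Matrix.mul_assoc, minkowskiMetric_mul_self, Matrix.mul_one]
    _ = η := by rw [hA.mul_minkowskiMetric_mul_transpose_mul_minkowskiMetric, Matrix.one_mul]

lemma det_sq : A.det ^ 2 = 1 := by
  have h := congrArg det hA.transpose_mul_minkowskiMetric_mul
  rw [det_mul, det_mul, det_transpose, det_minkowskiMetric] at h
  linear_combination -h

lemma adjugate_eq : A.adjugate = A.det • (η * Aᵀ * η) := by
  calc A.adjugate = A.adjugate * (A * (η * Aᵀ * η)) := by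
        rw [hA.mul_minkowskiMetric_mul_transpose_mul_minkowskiMetric, Matrix.mul_one]
    _ = A.det • (η * Aᵀ * η) := by
        rw [← Matrix.mul_assoc, adjugate_mul, Matrix.smul_mul, Matrix.one_mul]

lemma det_submatrix_succ : (A.submatrix Fin.succ Fin.succ).det = A.det * A 0 0 := by
  have h := congrFun (congrFun hA.adjugate_eq 0) 0
  rw [adjugate_fin_succ_eq_det_submatrix] at h
  simpa [minkowskiMetric, Matrix.mul_apply, Fin.sum_univ_four, Fin.succAbove_zero] using h

lemma tail_row_zero_dotProduct_self : Fin.tail (A 0) ⬝ᵥ Fin.tail (A 0) = A 0 0 ^ 2 - 1 := by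
  have h : Aᵀᵀ * η * Aᵀ = η := by
    rw [transpose_transpose, hA.mul_minkowskiMetric_mul_transpose]
  simpa using tail_col_zero_dotProduct_self h

lemma one_le_sq : 1 ≤ A 0 0 ^ 2 := by
  have h := dotProduct_self_star_nonneg (Fin.tail (A 0))
  rw [star_trivial, hA.tail_row_zero_dotProduct_self] at h
  linarith

lemma isOrthochronous_iff : IsOrthochronous A ↔ 0 < A 0 0 := by
  constructor
  · intro h
    have h0 := h (Pi.single 0 1) (by simp)
    rw [mulVec_single_one, Pi.single_eq_same, Real.sign_one, col_apply] at h0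
    by_contra hneg
    rcases (not_lt.mp hneg).lt_or_eq with hlt | heq
    · rw [Real.sign_of_neg hlt] at h0; norm_num at h0
    · rw [heq, Real.sign_zero] at h0; norm_num at h0
  · intro ha x hx
    have hx' : Fin.tail x ⬝ᵥ Fin.tail x < x 0 ^ 2 := by
      simpa [dotProduct, Fin.sum_univ_three, Fin.tail, ← sq] using hx
    have hxx := dotProduct_self_star_nonneg (Fin.tail x)
    rw [star_trivial] at hxx
    -- Cauchy-Schwarz with `|b|² = A₀₀² - 1`: the term `A₀₀ x₀` dominates `(A x)₀`.
    have hCS : (Fin.tail (A 0) ⬝ᵥ Fin.tail x) ^ 2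
        ≤ (Fin.tail (A 0) ⬝ᵥ Fin.tail (A 0)) * (Fin.tail x ⬝ᵥ Fin.tail x) := by
      simpa [dotProduct, ← sq] using
        Finset.sum_mul_sq_le_sq_mul_sq Finset.univ (Fin.tail (A 0)) (Fin.tail x)
    rw [hA.tail_row_zero_dotProduct_self] at hCS
    change Real.sign (A 0 ⬝ᵥ x) = _
    rw [dotProduct_fin_succ]
    exact Real.sign_mul_add_of_sq_lt ha (by nlinarith [mul_lt_mul_of_pos_left hx' (pow_pos ha 2)])

lemma diagonal_mul {e : Fin 4 → ℝ} (he : ∀ i, e i ^ 2 = 1) :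
    IsLorentz (diagonal e * A) := by
  intro x
  rw [← mulVec_mulVec, ← hA x]
  simp only [mink, mulVec_diagonal, mul_pow, he, one_mul]

end IsLorentz

lemma eq_blk4_iff {M : Matrix (Fin 4) (Fin 4) ℝ} {a : Matrix (Fin 1) (Fin 1) ℝ}
    {b : Matrix (Fin 1) (Fin 3) ℝ} {c : Matrix (Fin 3) (Fin 1) ℝ} {d : Matrix (Fin 3) (Fin 3) ℝ} :
    M = blk4 a b c d ↔ M 0 0 = a 0 0 ∧ Fin.tail (M 0) = b 0 ∧ Fin.tail (Mᵀ 0) = cᵀ 0 ∧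
      M.submatrix Fin.succ Fin.succ = d := by
  have h0s : ∀ j, blk4 a b c d 0 j.succ = b 0 j := by intro j; fin_cases j <;> rfl
  have hs0 : ∀ i, blk4 a b c d i.succ 0 = c i 0 := by intro i; fin_cases i <;> rfl
  have hss : ∀ i j, blk4 a b c d i.succ j.succ = d i j := by
    intro i j; fin_cases i <;> fin_cases j <;> rfl
  constructor
  · rintro rfl
    exact ⟨rfl, funext h0s, funext hs0, Matrix.ext hss⟩
  · rintro ⟨h00, h0, h1, h2⟩
    ext i j
    cases i using Fin.cases <;> cases j using Fin.cases
    · exact h00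
    · rw [h0s]; exact congrFun h0 _
    · rw [hs0]; exact congrFun h1 _
    · rw [hss, ← h2]; rfl

lemma eq_lorentzForm_iff {A : Matrix (Fin 4) (Fin 4) ℝ} {e1 e2 : ℝ} {v : Fin 3 → ℝ}
    {O : Matrix (Fin 3) (Fin 3) ℝ} :
    A = lorentzForm e1 e2 v O ↔ A 0 0 = e1 * gam v ∧ Fin.tail (A 0) = (e1 * gam v) • (v ᵥ* O) ∧
      Fin.tail (Aᵀ 0) = (e2 * gam v) • v ∧
      A.submatrix Fin.succ Fin.succ = e2 • (boostBlock (gam v) v * O) := by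
  rw [lorentzForm, eq_blk4_iff]
  rfl

lemma lorentzForm_eq_diagonal_mul (e1 e2 : ℝ) (v : Fin 3 → ℝ) (O : Matrix (Fin 3) (Fin 3) ℝ) :
    lorentzForm e1 e2 v O = diagonal ![e1, e2, e2, e2] * lorentzForm 1 1 v O := by
  have hes : ∀ i : Fin 3, ![e1, e2, e2, e2] i.succ = e2 := by intro i; fin_cases i <;> rfl
  obtain ⟨h00, h0, h1, h2⟩ := eq_lorentzForm_iff.mp (rfl : lorentzForm 1 1 v O = _)
  refine (eq_lorentzForm_iff.mpr
    ⟨?_, funext fun j => ?_, funext fun i => ?_, Matrix.ext fun i j => ?_⟩).symm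
  · rw [diagonal_mul, h00, cons_val_zero, one_mul]
  · have h := congrFun h0 j
    simp only [Fin.tail, Pi.smul_apply, smul_eq_mul] at h ⊢
    rw [diagonal_mul, h, cons_val_zero, one_mul, mul_assoc]
  · have h := congrFun h1 i
    simp only [Fin.tail, transpose_apply, Pi.smul_apply, smul_eq_mul] at h ⊢
    rw [diagonal_mul, h, hes, one_mul, mul_assoc]
  · have h := congrFun (congrFun h2 i) j
    simp only [submatrix_apply, Matrix.smul_apply, smul_eq_mul] at h ⊢
    rw [diagonal_mul, h, hes, one_mul]

lemma sq3_eq_dotProduct (v : Fin 3 → ℝ) : sq3 v = v ⬝ᵥ v := by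
  simp [sq3, dotProduct, Fin.sum_univ_three, sq]

lemma gam_eq {g : ℝ} {v : Fin 3 → ℝ} (hg : 0 < g) (hv : g ^ 2 * (1 - sq3 v) = 1) :
    gam v = g := by
  have h : 1 - sq3 v = g⁻¹ ^ 2 := by field_simp; linear_combination hv
  rw [gam, h, Real.sqrt_sq (inv_nonneg.mpr hg.le), one_div, inv_inv]

lemma sqrt_sq3_lt_one {g : ℝ} {v : Fin 3 → ℝ} (hv : g ^ 2 * (1 - sq3 v) = 1) : √(sq3 v) < 1 := by
  rw [Real.sqrt_lt' one_pos]
  by_contra! h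
  nlinarith [sq_nonneg g]

theorem IsLorentz.existsUnique_eq_lorentzForm_one_one {A : Matrix (Fin 4) (Fin 4) ℝ}
    (hA : IsLorentz A) (h00 : 0 < A 0 0) (hdet : A.det = 1) :
    ∃! p : (Fin 3 → ℝ) × Matrix (Fin 3) (Fin 3) ℝ,
      √(sq3 p.1) < 1 ∧ SO3 p.2 ∧ A = lorentzForm 1 1 p.1 p.2 := by
  have h0 : A 0 0 ≠ 0 := h00.ne'
  have hrel := hA.transpose_mul_minkowskiMetric_mul
  set v := (A 0 0)⁻¹ • Fin.tail (Aᵀ 0) with hvdef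
  have hv : A 0 0 ^ 2 * (1 - v ⬝ᵥ v) = 1 := by
    rw [hvdef, dotProduct_smul, smul_dotProduct, tail_col_zero_dotProduct_self hrel, smul_eq_mul,
      smul_eq_mul]
    field_simp; ring
  have hv3 : A 0 0 ^ 2 * (1 - sq3 v) = 1 := by rwa [sq3_eq_dotProduct]
  have hgam : gam v = A 0 0 := gam_eq h00 hv3
  have hDv : (A.submatrix Fin.succ Fin.succ)ᵀ *ᵥ v = Fin.tail (A 0) := by
    rw [hvdef, mulVec_smul, transpose_submatrix_mulVec_tail_col_zero hrel, smul_smul,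
      inv_mul_cancel₀ h0, one_smul]
  refine ⟨(v, boostBlockInv (A 0 0) v * A.submatrix Fin.succ Fin.succ),
    ⟨sqrt_sq3_lt_one hv3, ⟨?_, ?_⟩, ?_⟩, ?_⟩
  · exact transpose_mul_self_boostBlockInv_mul h00 hv hDv (transpose_submatrix_mul_submatrix hrel)
  · rw [det_mul, det_boostBlockInv h00 hv, hA.det_submatrix_succ, hdet, one_mul,
      inv_mul_cancel₀ h0]
  · refine eq_lorentzForm_iff.mpr ⟨by rw [hgam, one_mul], ?_, ?_, ?_⟩
    · rw [hgam, one_mul, vecMul_boostBlockInv_mul h00 hv, hDv, smul_smul, mul_inv_cancel₀ h0,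
        one_smul]
    · rw [hgam, one_mul, hvdef, smul_smul, mul_inv_cancel₀ h0, one_smul]
    · rw [hgam, one_smul, ← Matrix.mul_assoc, boostBlock_mul_boostBlockInv h00 hv, Matrix.one_mul]
  · rintro ⟨w, P⟩ ⟨-, -, hw⟩
    obtain ⟨hw00, -, hw0, hwD⟩ := eq_lorentzForm_iff.mp hw
    dsimp only at hw00 hw0 hwD
    rw [one_mul] at hw00 hw0
    have hwv : w = v := by
      rw [hvdef, hw0, hw00, smul_smul, inv_mul_cancel₀ (hw00 ▸ h00).ne', one_smul]
    subst hwv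
    rw [Prod.mk.injEq, and_iff_right rfl, hwD, hgam, one_smul, ← Matrix.mul_assoc,
      boostBlockInv_mul_boostBlock h00 hv, Matrix.one_mul]

lemma eps1_sq (A : Matrix (Fin 4) (Fin 4) ℝ) : eps1 A ^ 2 = 1 := by
  unfold eps1; split_ifs <;> norm_num

lemma eps2_sq (A : Matrix (Fin 4) (Fin 4) ℝ) : eps2 A ^ 2 = 1 := by
  unfold eps2; split_ifs <;> norm_num

namespace IsLorentz

variable {A : Matrix (Fin 4) (Fin 4) ℝ} (hA : IsLorentz A)
include hA

lemma eps1_mul_pos : 0 < eps1 A * A 0 0 := by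
  unfold eps1
  split_ifs with h
  · rw [one_mul]; exact hA.isOrthochronous_iff.mp h
  · have hle : A 0 0 ≤ 0 := not_lt.mp (mt hA.isOrthochronous_iff.mpr h)
    nlinarith [hA.one_le_sq]

lemma eps1_mul_eps2_mul_det : eps1 A * eps2 A * A.det = 1 := by
  rcases sq_eq_one_iff.mp hA.det_sq with hdet | hdet <;>
    by_cases hO : IsOrthochronous A <;> norm_num [eps1, eps2, IsProper, hdet, hO]

end IsLorentz

/-- Any Lorentz transformation can be written uniquely as lorentzForm ε₁(A) ε₂(A) v O
with |v| < 1 and O ∈ SO(3,ℝ). -/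
theorem lorentz_decomposition (A : Matrix (Fin 4) (Fin 4) ℝ) (hA : IsLorentz A) :
    ∃! p : (Fin 3 → ℝ) × Matrix (Fin 3) (Fin 3) ℝ,
      Real.sqrt (sq3 p.1) < 1 ∧ SO3 p.2 ∧
      A = lorentzForm (eps1 A) (eps2 A) p.1 p.2 := by
  set e : Fin 4 → ℝ := ![eps1 A, eps2 A, eps2 A, eps2 A]
  have he : ∀ i, e i ^ 2 = 1 := by
    intro i; fin_cases i <;> simp [e, eps1_sq, eps2_sq]
  have hee : diagonal e * diagonal e = 1 := by
    rw [diagonal_mul_diagonal, ← diagonal_one]; congr 1; ext i; rw [← sq, he]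
  have h00 : 0 < (diagonal e * A) 0 0 := by simpa [diagonal_mul, e] using hA.eps1_mul_pos
  have hdet : (diagonal e * A).det = 1 := by
    calc (diagonal e * A).det = eps1 A * eps2 A ^ 2 * eps2 A * A.det := by
          rw [det_mul, det_diagonal, Fin.prod_univ_four]
          change eps1 A * eps2 A * eps2 A * eps2 A * A.det = _
          ring
      _ = 1 := by rw [eps2_sq, mul_one, hA.eps1_mul_eps2_mul_det]
  have hiff : ∀ v O, A = lorentzForm (eps1 A) (eps2 A) v O ↔
      diagonal e * A = lorentzForm 1 1 v O := fun v O => by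
    rw [lorentzForm_eq_diagonal_mul]
    exact eq_mul_iff_mul_eq_of_mul_self_eq_one hee
  simpa only [hiff] using (hA.diagonal_mul he).existsUnique_eq_lorentzForm_one_one h00 hdet
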